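/- Let real numbers n > 0, ν₁ > 2n, and ν, μ₁, μ₂, μ₃, α with 0 ≤ μᵢ ≤ n, 0 ≤ α ≤ n. Suppose (6−k)n − (4−k)ν₁ + (3/2)α − (1/2)μ₁ − μ₂ − … − μ_k ≥ 0, n − ν₁ + (3/2)μ₁ − (1/2)α ≥ 0, and n − ν₁ + 2μᵢ − α ≥ 0 for i = 2,…,k, where k ∈ {1,2,3}. Then a contradiction follows; i.e., such a system has no solution. -/
import Mathlib


open Finset

/-- The "point" case system of inequalities is infeasible: if `n > 0`, `ν₁ > 2n`,
`0 ≤ μᵢ ≤ n` for `i = 1,…,k`, `0 ≤ α ≤ n`, `k ∈ {1,2,3}`, and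
`(6−k)n − (4−k)ν₁ + (3/2)α − (1/2)μ₁ − μ₂ − … − μ_k ≥ 0`,
`n − ν₁ + (3/2)μ₁ − (1/2)α ≥ 0`, and `n − ν₁ + 2μᵢ − α ≥ 0` for `i = 2,…,k`,
then a contradiction follows. -/
theorem stmt_6 (n ν₁ α : ℝ) (k : ℕ) (μ : ℕ → ℝ)
    (hn : 0 < n) (hν₁ : ν₁ > 2 * n) (hk : 1 ≤ k ∧ k ≤ 3)
    (hμ : ∀ i, 1 ≤ i → i ≤ k → 0 ≤ μ i ∧ μ i ≤ n)
    (hα : 0 ≤ α ∧ α ≤ n)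
    (h1 : (6 - (k : ℝ)) * n - (4 - (k : ℝ)) * ν₁ + 3 / 2 * α - 1 / 2 * μ 1
      - ∑ i ∈ Finset.Icc 2 k, μ i ≥ 0)
    (h2 : n - ν₁ + 3 / 2 * μ 1 - 1 / 2 * α ≥ 0)
    (h3 : ∀ i, 2 ≤ i → i ≤ k → n - ν₁ + 2 * μ i - α ≥ 0) :
    False := by
  obtain ⟨hk1, hk3⟩ := hk
  obtain ⟨hα0, hαn⟩ := hα
  obtain ⟨hμ10, hμ1n⟩ := hμ 1 le_rfl hk1
  interval_cases k
  · simp only [show Finset.Icc 2 1 = (∅ : Finset ℕ) by decide, Finset.sum_empty] at h1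
    push_cast at h1
    linarith
  · obtain ⟨hμ20, hμ2n⟩ := hμ 2 (by norm_num) le_rfl
    have h32 := h3 2 le_rfl le_rfl
    rw [show Finset.Icc 2 2 = {2} by decide, Finset.sum_singleton] at h1
    push_cast at h1
    linarith
  · obtain ⟨hμ20, hμ2n⟩ := hμ 2 (by norm_num) (by norm_num)
    obtain ⟨hμ30, hμ3n⟩ := hμ 3 (by norm_num) le_rfl
    have h32 := h3 2 le_rfl (by norm_num)
    have h33 := h3 3 (by norm_num) le_rfl
    rw [show Finset.Icc 2 3 = {2, 3} by decide, Finset.sum_insert (by decide), Finset.sum_singleton] at h1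
    push_cast at h1
    linarith
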